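/- arXiv:q-alg/9509003 — 4 statements merged into one kernel-verified Lean document; each statement's English description precedes it below -/
import Mathlib

section
/- For every polynomial f ∈ F[z_1,…,z_N] that is symmetric in all N variables, one has Σ_{i=1}^N D_i² f = H f, where H = Σ_{j=1}^N (z_j ∂/∂z_j)² + β Σ_{1≤j<k≤N} ((z_j+z_k)/(z_j−z_k))(z_j ∂/∂z_j − z_k ∂/∂z_k); in particular Σ_{i=1}^N D_i² maps symmetric polynomials to symmetric polynomials. -/
open MvPolynomial Finset

section CSDefs

variable {F : Type*} [Field F] [CharZero F]

/-- Exact division in a polynomial ring: `divExact d f = f / d` when `d ∣ f`, junk otherwise. -/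
noncomputable def divExact {σ : Type*} (d f : MvPolynomial σ F) : MvPolynomial σ F := by
  classical exact if h : ∃ c, f = d * c then h.choose else 0

/-- The exchange operator `K_{ij}` permuting the variables `z_i` and `z_j`. -/
noncomputable def Kswap {N : ℕ} (i j : Fin N) (f : MvPolynomial (Fin N) F) :
    MvPolynomial (Fin N) F :=
  rename (Equiv.swap i j) f

/-- The Dunkl operator `∇_i = ∂_i + β ∑_{j ≠ i} (z_i - z_j)⁻¹ (1 - K_{ij})`. -/
noncomputable def nabla {N : ℕ} (β : F) (i : Fin N) (f : MvPolynomial (Fin N) F) :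
    MvPolynomial (Fin N) F :=
  pderiv i f + β • ∑ j ∈ Finset.univ.erase i, divExact (X i - X j) (f - Kswap i j f)

/-- `D_i = z_i ∇_i`. -/
noncomputable def Dop {N : ℕ} (β : F) (i : Fin N) (f : MvPolynomial (Fin N) F) :
    MvPolynomial (Fin N) F :=
  X i * nabla β i f

/-- `(D_{j₁} + kβ)(D_{j₂} + (k+1)β) ⋯` applied along a list of indices. -/
noncomputable def Dlist {N : ℕ} (β : F) :
    ℕ → List (Fin N) → MvPolynomial (Fin N) F → MvPolynomial (Fin N) F
  | _, [], f => f
  | k, j :: rest, f => Dop β j (Dlist β (k + 1) rest f) + ((k : F) * β) • Dlist β (k + 1) rest f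

/-- `D_{k,J} = (D_{j₁} + kβ)(D_{j₂} + (k+1)β) ⋯ (D_{j_ℓ} + (k+ℓ-1)β)` for
`J = {j₁ < j₂ < … < j_ℓ}`. -/
noncomputable def DJ {N : ℕ} (β : F) (k : ℕ) (J : Finset (Fin N))
    (f : MvPolynomial (Fin N) F) : MvPolynomial (Fin N) F :=
  Dlist β k (J.sort (· ≤ ·)) f

/-- `z_J = ∏_{i ∈ J} z_i`. -/
noncomputable def zJ {N : ℕ} (J : Finset (Fin N)) : MvPolynomial (Fin N) F := ∏ i ∈ J, X i

/-- The creation operator `B⁺_{i,J} = ∑_{J' ⊆ J, |J'| = i} z_{J'} D_{1,J'}`. -/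
noncomputable def Bplus {N : ℕ} (β : F) (i : ℕ) (J : Finset (Fin N))
    (f : MvPolynomial (Fin N) F) : MvPolynomial (Fin N) F :=
  ∑ J' ∈ J.powersetCard i, zJ J' * DJ β 1 J' f

/-- `A_{ij} = ((z_i+z_j)/(z_i-z_j))(z_i ∂_i - z_j ∂_j)`. -/
noncomputable def Aop {N : ℕ} (i j : Fin N) (f : MvPolynomial (Fin N) F) :
    MvPolynomial (Fin N) F :=
  divExact (X i - X j) ((X i + X j) * (X i * pderiv i f - X j * pderiv j f))

/-- `H^{(S)} = ∑_{i ∈ S} (z_i ∂_i)² + β ∑_{i<j, i,j ∈ S} A_{ij}`. -/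
noncomputable def Hop {N : ℕ} (β : F) (S : Finset (Fin N)) (f : MvPolynomial (Fin N) F) :
    MvPolynomial (Fin N) F :=
  ∑ i ∈ S, X i * pderiv i (X i * pderiv i f)
    + β • ∑ i ∈ S, ∑ j ∈ S.filter (fun j => i < j), Aop i j f

/-- A polynomial is symmetric in the variables indexed by `S`. -/
def SymmOn {N : ℕ} (S : Finset (Fin N)) (f : MvPolynomial (Fin N) F) : Prop :=
  ∀ i ∈ S, ∀ j ∈ S, rename (Equiv.swap i j) f = f

/-- `phiCS β N lam i = (B⁺_i)^{λ_i - λ_{i+1}} ⋯ (B⁺_1)^{λ_1 - λ_2} · 1`,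
where `lam` is 0-indexed: `lam (j-1) = λ_j`. -/
noncomputable def phiCS (β : F) (N : ℕ) (lam : ℕ → ℕ) : ℕ → MvPolynomial (Fin N) F
  | 0 => 1
  | i + 1 => (fun f => Bplus β (i + 1) Finset.univ f)^[lam i - lam (i + 1)] (phiCS β N lam i)

/-- The monomial symmetric polynomial attached to an exponent vector. -/
noncomputable def msym (N : ℕ) (lam : Fin N → ℕ) : MvPolynomial (Fin N) F := by
  classical
  exact ∑ v ∈ (Finset.univ : Finset (Equiv.Perm (Fin N))).image
      (fun σ => fun i => lam (σ i)), ∏ i, X i ^ v i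

/-- `𝐷̂_i = D_i + β(i-1) - β ∑_{j<i} (1 - K_{ij})` (0-indexed: `i-1` becomes `i`). -/
noncomputable def Dhat {N : ℕ} (β : F) (i : Fin N) (f : MvPolynomial (Fin N) F) :
    MvPolynomial (Fin N) F :=
  Dop β i f + (β * ((i : ℕ) : F)) • f
    - β • ∑ j ∈ Finset.univ.filter (fun j => j < i), (f - Kswap i j f)

end CSDefs

section AuxLemmas

variable {F : Type*} [Field F] [CharZero F] {N : ℕ}

lemma divExact_mul_cancel {σ : Type*} {d : MvPolynomial σ F} (hd : d ≠ 0)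
    (c : MvPolynomial σ F) : divExact d (d * c) = c := by
  unfold divExact
  have h : ∃ c', (d * c : MvPolynomial σ F) = d * c' := ⟨c, rfl⟩
  rw [dif_pos h]
  exact (mul_left_cancel₀ hd h.choose_spec).symm

lemma mul_divExact {σ : Type*} {d f : MvPolynomial σ F} (hd : d ≠ 0) (h : d ∣ f) :
    d * divExact d f = f := by
  obtain ⟨c, rfl⟩ := h
  rw [divExact_mul_cancel hd]

lemma divExact_zero' {σ : Type*} {d : MvPolynomial σ F} (hd : d ≠ 0) :
    divExact d (0 : MvPolynomial σ F) = 0 := by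
  simpa using divExact_mul_cancel hd 0

lemma X_sub_X_ne_zero {i j : Fin N} (h : i ≠ j) :
    (X i - X j : MvPolynomial (Fin N) F) ≠ 0 :=
  sub_ne_zero.mpr fun e => h (MvPolynomial.X_injective e)

lemma dvd_sub_rename_swap (i j : Fin N) (g : MvPolynomial (Fin N) F) :
    (X i - X j : MvPolynomial (Fin N) F) ∣ g - rename (Equiv.swap i j) g := by
  induction g using MvPolynomial.induction_on with
  | C a => simp
  | add p q hp hq =>
      have h : p + q - rename (Equiv.swap i j) (p + q)
          = (p - rename (Equiv.swap i j) p) + (q - rename (Equiv.swap i j) q) := by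
        rw [map_add]; ring
      rw [h]; exact dvd_add hp hq
  | mul_X p k hp =>
      rw [map_mul, rename_X]
      have h : p * X k - rename (Equiv.swap i j) p * X (Equiv.swap i j k)
          = (p - rename (Equiv.swap i j) p) * X (Equiv.swap i j k)
            + p * (X k - X (Equiv.swap i j k)) := by ring
      rw [h]
      refine dvd_add (hp.mul_right _) (Dvd.dvd.mul_left ?_ p)
      rcases eq_or_ne k i with rfl | hki
      · rw [Equiv.swap_apply_left]
      · rcases eq_or_ne k j with rfl | hkj
        · rw [Equiv.swap_apply_right]
          exact dvd_sub_comm.mp dvd_rfl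
        · rw [Equiv.swap_apply_of_ne_of_ne hki hkj]; simp

/-- The quotient `(z_i ∂_i f - z_j ∂_j f)/(z_i - z_j)`. -/
noncomputable def Qquot (f : MvPolynomial (Fin N) F) (i j : Fin N) : MvPolynomial (Fin N) F :=
  divExact (X i - X j) (X i * pderiv i f - X j * pderiv j f)

variable {f : MvPolynomial (Fin N) F} (hf : f.IsSymmetric)

/-- `g i = z_i ∂_i f`. -/
noncomputable def gfun (f : MvPolynomial (Fin N) F) (i : Fin N) : MvPolynomial (Fin N) F :=
  X i * pderiv i f

include hf in
lemma gfun_rename (τ : Equiv.Perm (Fin N)) (i : Fin N) :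
    rename τ (gfun f i) = gfun f (τ i) := by
  unfold gfun
  rw [map_mul, rename_X, ← pderiv_rename τ.injective i f, hf τ]

include hf in
lemma gfun_dvd (i j : Fin N) :
    (X i - X j : MvPolynomial (Fin N) F) ∣ gfun f i - gfun f j := by
  have h := dvd_sub_rename_swap i j (gfun f i)
  rwa [gfun_rename hf (Equiv.swap i j) i, Equiv.swap_apply_left] at h

include hf in
lemma Qquot_mul (i j : Fin N) (hij : i ≠ j) :
    (X i - X j) * Qquot f i j = gfun f i - gfun f j :=
  mul_divExact (X_sub_X_ne_zero hij) (gfun_dvd hf i j)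

include hf in
lemma Qquot_symm (i j : Fin N) (hij : i ≠ j) : Qquot f j i = Qquot f i j := by
  apply mul_left_cancel₀ (X_sub_X_ne_zero (F := F) hij.symm)
  rw [Qquot_mul hf j i hij.symm]
  linear_combination Qquot_mul hf i j hij

include hf in
lemma Qquot_rename (τ : Equiv.Perm (Fin N)) (i j : Fin N) (hij : i ≠ j) :
    rename τ (Qquot f i j) = Qquot f (τ i) (τ j) := by
  have hτij : τ i ≠ τ j := fun e => hij (τ.injective e)
  apply mul_left_cancel₀ (X_sub_X_ne_zero (F := F) hτij)
  have h1 : (X (τ i) - X (τ j)) * rename τ (Qquot f i j)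
      = rename τ ((X i - X j) * Qquot f i j) := by
    rw [map_mul, map_sub, rename_X, rename_X]
  rw [h1, Qquot_mul hf i j hij, Qquot_mul hf (τ i) (τ j) hτij, map_sub,
    gfun_rename hf τ i, gfun_rename hf τ j]

lemma sum_lt_comm {M : Type*} [AddCommMonoid M] (G : Fin N → Fin N → M) :
    ∑ i, ∑ j ∈ Finset.univ.filter (· < i), G i j
      = ∑ i, ∑ j ∈ Finset.univ.filter (i < ·), G j i := by
  simp_rw [Finset.sum_filter]
  exact Finset.sum_comm

lemma erase_eq_union_lt (i : Fin N) :
    (Finset.univ.erase i) = Finset.univ.filter (· < i) ∪ Finset.univ.filter (i < ·) := by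
  ext j
  simp only [Finset.mem_erase, Finset.mem_union, Finset.mem_filter, Finset.mem_univ,
    true_and, and_true]
  constructor
  · intro h; exact h.lt_or_gt
  · rintro (h | h)
    · exact h.ne
    · exact h.ne'

lemma disjoint_lt_gt (i : Fin N) :
    Disjoint (Finset.univ.filter (· < i)) (Finset.univ.filter (i < ·) : Finset (Fin N)) := by
  rw [Finset.disjoint_left]
  intro a ha hb
  simp only [Finset.mem_filter] at ha hb
  exact absurd hb.2 (not_lt.mpr ha.2.le)

end AuxLemmas

/-- For every symmetric polynomial `f`, `∑ᵢ Dᵢ² f = H f`; in particular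
`∑ᵢ Dᵢ²` maps symmetric polynomials to symmetric polynomials. -/
theorem statement_0 {F : Type*} [Field F] [CharZero F] {N : ℕ} (β : F)
    (f : MvPolynomial (Fin N) F) (hf : f.IsSymmetric) :
    (∑ i : Fin N, Dop β i (Dop β i f)) = Hop β Finset.univ f ∧
      MvPolynomial.IsSymmetric (∑ i : Fin N, Dop β i (Dop β i f)) := by
  classical
  have hKf : ∀ i j : Fin N, Kswap i j f = f := fun i j => hf (Equiv.swap i j)
  -- `∇ᵢ f = ∂ᵢ f` for symmetric `f`, hence `Dᵢ f = zᵢ ∂ᵢ f`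
  have hDf : ∀ i : Fin N, Dop β i f = gfun f i := by
    intro i
    unfold Dop nabla gfun
    congr 1
    rw [Finset.sum_eq_zero, smul_zero, add_zero]
    intro j hj
    rw [hKf i j, sub_self,
      divExact_zero' (X_sub_X_ne_zero (Finset.ne_of_mem_erase hj).symm)]
  have hKg : ∀ i j : Fin N, Kswap i j (gfun f i) = gfun f j := by
    intro i j
    unfold Kswap
    rw [gfun_rename hf (Equiv.swap i j) i, Equiv.swap_apply_left]
  -- the square of `Dᵢ`
  have hDD : ∀ i : Fin N, Dop β i (Dop β i f)
      = X i * pderiv i (gfun f i)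
        + β • ∑ j ∈ Finset.univ.erase i, X i * Qquot f i j := by
    intro i
    rw [hDf i]
    unfold Dop nabla
    rw [mul_add, mul_smul_comm, Finset.mul_sum]
    congr 2
    apply Finset.sum_congr rfl
    intro j hj
    rw [hKg i j]
    simp only [Qquot, gfun]
  have hS : (∑ i : Fin N, Dop β i (Dop β i f))
      = (∑ i : Fin N, X i * pderiv i (gfun f i))
        + β • ∑ i : Fin N, ∑ j ∈ Finset.univ.erase i, X i * Qquot f i j := by
    simp_rw [hDD]
    rw [Finset.sum_add_distrib, ← Finset.smul_sum]
  -- `A_{ij} f = (zᵢ + zⱼ) Q_{ij}`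
  have hA : ∀ i j : Fin N, i ≠ j → Aop i j f = (X i + X j) * Qquot f i j := by
    intro i j hij
    unfold Aop
    have h : (X i + X j) * (X i * pderiv i f - X j * pderiv j f)
        = (X i - X j) * ((X i + X j) * Qquot f i j) := by
      have h2 := Qquot_mul hf i j hij
      unfold gfun at h2
      rw [← h2]; ring
    rw [h, divExact_mul_cancel (X_sub_X_ne_zero hij)]
  -- the cross-term sum equals the `A`-part of `H`
  have hT2 : (∑ i : Fin N, ∑ j ∈ Finset.univ.erase i, X i * Qquot f i j)
      = ∑ i : Fin N, ∑ j ∈ Finset.univ.filter (fun j => i < j), Aop i j f := by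
    have hsplit : ∀ i : Fin N, ∑ j ∈ Finset.univ.erase i, X i * Qquot f i j
        = (∑ j ∈ Finset.univ.filter (· < i), X i * Qquot f i j)
          + ∑ j ∈ Finset.univ.filter (i < ·), X i * Qquot f i j := by
      intro i
      rw [erase_eq_union_lt, Finset.sum_union (disjoint_lt_gt i)]
    simp_rw [hsplit]
    rw [Finset.sum_add_distrib, sum_lt_comm (fun i j => X i * Qquot f i j),
      ← Finset.sum_add_distrib]
    apply Finset.sum_congr rfl
    intro i _
    rw [← Finset.sum_add_distrib]
    apply Finset.sum_congr rfl
    intro j hj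
    have hij : i < j := (Finset.mem_filter.mp hj).2
    rw [Qquot_symm hf i j hij.ne, hA i j hij.ne]
    ring
  have hmain : (∑ i : Fin N, Dop β i (Dop β i f)) = Hop β Finset.univ f := by
    rw [hS, hT2]
    unfold Hop gfun
    rfl
  refine ⟨hmain, ?_⟩
  -- symmetry of the result
  intro τ
  rw [hS, map_add, map_smul, map_sum, map_sum]
  congr 1
  · have h1 : ∀ i : Fin N, rename τ (X i * pderiv i (gfun f i))
        = X (τ i) * pderiv (τ i) (gfun f (τ i)) := by
      intro i
      rw [map_mul, rename_X, ← pderiv_rename τ.injective i (gfun f i),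
        gfun_rename hf τ i]
    simp_rw [h1]
    exact Equiv.sum_comp τ (fun k => X k * pderiv k (gfun f k))
  · congr 1
    have himg : ∀ i : Fin N, (Finset.univ.erase i).image τ = Finset.univ.erase (τ i) := by
      intro i
      ext k
      simp only [Finset.mem_image, Finset.mem_erase, Finset.mem_univ, and_true, true_and,
        ne_eq]
      constructor
      · rintro ⟨j, hj, rfl⟩
        exact fun e => hj (τ.injective e)
      · intro hk
        exact ⟨τ.symm k, fun e => hk (by rw [← e, Equiv.apply_symm_apply]), by simp⟩
    calc ∑ i : Fin N, rename τ (∑ j ∈ Finset.univ.erase i, X i * Qquot f i j)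
        = ∑ i : Fin N, ∑ j ∈ Finset.univ.erase i, X (τ i) * Qquot f (τ i) (τ j) := by
          refine Finset.sum_congr rfl fun i _ => ?_
          rw [map_sum]
          refine Finset.sum_congr rfl fun j hj => ?_
          rw [map_mul, rename_X,
            Qquot_rename hf τ i j (Finset.ne_of_mem_erase hj).symm]
      _ = ∑ i : Fin N, ∑ j ∈ Finset.univ.erase (τ i), X (τ i) * Qquot f (τ i) j := by
          refine Finset.sum_congr rfl fun i _ => ?_
          rw [← himg i, Finset.sum_image (fun a _ b _ e => τ.injective e)]
      _ = ∑ i : Fin N, ∑ j ∈ Finset.univ.erase i, X i * Qquot f i j :=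
          Equiv.sum_comp τ (fun k => ∑ j ∈ Finset.univ.erase k, X k * Qquot f k j)
end

section
/- For 1 ≤ k ≤ N−1 the following operator identity holds on F[z_1,…,z_N]: B⁺_{k,{1,…,N}} = Σ_{ℓ=0}^{k} Σ_{J ⊆ {k+2,…,N}, |J| = ℓ} z_J · B⁺_{k−ℓ,{1,…,k+1}} · D_{k−ℓ+1,J}, with the conventions B⁺_{0,J} = 1, z_∅ = 1 and D_{k+1,∅} = 1. -/
open MvPolynomial Finset

/-!
Split a `k`-subset `J'` of `{1,…,N}` as `J' = J₂ ∪ J` with `J₂ ⊆ {1,…,k+1}` and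
`J ⊆ {k+2,…,N}`. Every index of `J₂` precedes every index of `J`, so the ordered product
`D_{1,J'}` factors as `D_{1,J₂} ∘ D_{|J₂|+1,J}`, while `z_{J'} = z_J z_{J₂}`; grouping by
`ℓ = |J|` gives the identity. Only the order of the factors `D_i` matters, not what they are.
-/

namespace Finset

theorem sort_union_of_forall_lt {α : Type*} [LinearOrder α] {s t : Finset α}
    (h : ∀ a ∈ s, ∀ b ∈ t, a < b) :
    (s ∪ t).sort (· ≤ ·) = s.sort (· ≤ ·) ++ t.sort (· ≤ ·) := by
  have hnodup : (s.sort (· ≤ ·) ++ t.sort (· ≤ ·)).Nodup :=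
    List.nodup_append.2 ⟨sort_nodup _ _, sort_nodup _ _, fun a ha b hb =>
      ((h a ((mem_sort _).1 ha) b ((mem_sort _).1 hb)).ne)⟩
  have hsorted : (s.sort (· ≤ ·) ++ t.sort (· ≤ ·)).Pairwise (· ≤ ·) :=
    List.pairwise_append.2 ⟨pairwise_sort _ _, pairwise_sort _ _, fun a ha b hb =>
      (h a ((mem_sort _).1 ha) b ((mem_sort _).1 hb)).le⟩
  simpa [List.toFinset_append] using (List.toFinset_sort (· ≤ ·) hnodup).2 hsorted

theorem sum_powersetCard_union {α M : Type*} [DecidableEq α] [AddCommMonoid M]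
    {s t : Finset α} (hst : Disjoint s t) (k : ℕ) (g : Finset α → M) :
    ∑ U ∈ (s ∪ t).powersetCard k, g U
      = ∑ l ∈ range (k + 1), ∑ A ∈ s.powersetCard l, ∑ B ∈ t.powersetCard (k - l),
          g (A ∪ B) := by
  have inter_union_inter {U : Finset α} (hU : U ⊆ s ∪ t) : U ∩ s ∪ U ∩ t = U := by
    rw [← inter_union_distrib_left, inter_eq_left.2 hU]
  have inter_left {A B : Finset α} (hA : A ⊆ s) (hB : B ⊆ t) : (A ∪ B) ∩ s = A := by
    rw [union_inter_distrib_right, inter_eq_left.2 hA,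
      disjoint_iff_inter_eq_empty.1 (hst.symm.mono_left hB), union_empty]
  have inter_right {A B : Finset α} (hA : A ⊆ s) (hB : B ⊆ t) : (A ∪ B) ∩ t = B := by
    rw [union_inter_distrib_right, inter_eq_left.2 hB,
      disjoint_iff_inter_eq_empty.1 (hst.mono_left hA), empty_union]
  rw [sum_sigma', sum_sigma']
  refine sum_bij' (fun U _ => ⟨⟨#(U ∩ s), U ∩ s⟩, U ∩ t⟩) (fun p _ => p.1.2 ∪ p.2)
    ?_ ?_ ?_ ?_ ?_
  · simp only [mem_powersetCard, mem_sigma, mem_range]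
    rintro U ⟨hU, rfl⟩
    have hcard : #(U ∩ s ∪ U ∩ t) = #(U ∩ s) + #(U ∩ t) :=
      card_union_of_disjoint (hst.mono inter_subset_right inter_subset_right)
    rw [inter_union_inter hU] at hcard
    exact ⟨⟨by omega, inter_subset_right, trivial⟩, inter_subset_right, by omega⟩
  · rintro ⟨⟨l, A⟩, B⟩ h
    simp only [mem_powersetCard, mem_sigma, mem_range] at h ⊢
    obtain ⟨⟨hl, hA, rfl⟩, hB, hBcard⟩ := h
    refine ⟨union_subset_union hA hB, ?_⟩
    rw [card_union_of_disjoint (hst.mono hA hB), hBcard]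
    omega
  · intro U hU
    exact inter_union_inter (mem_powersetCard.1 hU).1
  · rintro ⟨⟨l, A⟩, B⟩ h
    simp only [mem_powersetCard, mem_sigma, mem_range] at h
    obtain ⟨⟨-, hA, rfl⟩, hB, -⟩ := h
    simp only [inter_left hA hB, inter_right hA hB]
  · intro U hU
    rw [inter_union_inter (mem_powersetCard.1 hU).1]

end Finset

section CreationOperator

variable {F : Type*} [Field F] {N : ℕ}

theorem Dlist_append (β : F) (k : ℕ) (L₁ L₂ : List (Fin N)) (f : MvPolynomial (Fin N) F) :
    Dlist β k (L₁ ++ L₂) f = Dlist β k L₁ (Dlist β (k + L₁.length) L₂ f) := by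
  induction L₁ generalizing k with
  | nil => rfl
  | cons j L₁ ih =>
    rw [List.cons_append, Dlist, Dlist, ih, List.length_cons, Nat.add_right_comm, add_assoc]

theorem DJ_union_of_forall_lt (β : F) (k : ℕ) {s t : Finset (Fin N)}
    (h : ∀ a ∈ s, ∀ b ∈ t, a < b) (f : MvPolynomial (Fin N) F) :
    DJ β k (s ∪ t) f = DJ β k s (DJ β (k + #s) t f) := by
  rw [DJ, sort_union_of_forall_lt h, Dlist_append, length_sort, DJ, DJ]

theorem zJ_union {s t : Finset (Fin N)} (h : Disjoint s t) :
    (zJ (s ∪ t) : MvPolynomial (Fin N) F) = zJ s * zJ t :=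
  prod_union h

end CreationOperator

theorem statement_9_general {F : Type*} [Field F] {N : ℕ} (β : F) (k : ℕ)
    (f : MvPolynomial (Fin N) F) :
    Bplus β k Finset.univ f
      = ∑ l ∈ Finset.range (k + 1),
          ∑ J ∈ (Finset.univ.filter (fun x : Fin N => k + 1 ≤ (x : ℕ))).powersetCard l,
            zJ J * Bplus β (k - l) (Finset.univ.filter (fun x : Fin N => (x : ℕ) ≤ k))
              (DJ β (k - l + 1) J f) := by
  set lower := univ.filter (fun x : Fin N => (x : ℕ) ≤ k)
  set upper := univ.filter (fun x : Fin N => k + 1 ≤ (x : ℕ))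
  have lower_lt_upper : ∀ a ∈ lower, ∀ b ∈ upper, a < b := by
    simp only [lower, upper, mem_filter, mem_univ, true_and, Fin.lt_def]
    omega
  have huniv : univ = upper ∪ lower := by
    ext x
    simp only [lower, upper, mem_union, mem_filter, mem_univ, true_and, true_iff]
    omega
  have hdisj : Disjoint upper lower :=
    disjoint_left.2 fun a ha ha' => (lower_lt_upper a ha' a ha).false
  rw [Bplus, huniv, sum_powersetCard_union hdisj]
  refine sum_congr rfl fun l _ => sum_congr rfl fun J hJ => ?_
  rw [Bplus, mul_sum]
  refine sum_congr rfl fun J' hJ' => ?_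
  obtain ⟨hJ, -⟩ := mem_powersetCard.1 hJ
  obtain ⟨hJ', hJ'card⟩ := mem_powersetCard.1 hJ'
  rw [union_comm, zJ_union (hdisj.symm.mono hJ' hJ),
    DJ_union_of_forall_lt β 1 (fun a ha b hb => lower_lt_upper a (hJ' ha) b (hJ hb)),
    hJ'card, add_comm 1, mul_comm (zJ J'), mul_assoc]

/-- the decomposition
`B⁺_k = ∑_{ℓ=0}^k ∑_{J ⊆ {k+2,…,N}, |J|=ℓ} z_J B⁺_{k-ℓ,{1,…,k+1}} D_{k-ℓ+1,J}`.
(0-indexed: `{1,…,k+1}` is `{x | x ≤ k}` and `{k+2,…,N}` is `{x | k+1 ≤ x}`.) -/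
theorem statement_9 {F : Type*} [Field F] [CharZero F] {N : ℕ} (β : F) (k : ℕ)
    (hk1 : 1 ≤ k) (hkN : k ≤ N - 1) (f : MvPolynomial (Fin N) F) :
    Bplus β k Finset.univ f
      = ∑ l ∈ Finset.range (k + 1),
          ∑ J ∈ (Finset.univ.filter (fun x : Fin N => k + 1 ≤ (x : ℕ))).powersetCard l,
            zJ J * Bplus β (k - l) (Finset.univ.filter (fun x : Fin N => (x : ℕ) ≤ k))
              (DJ β (k - l + 1) J f) :=
  statement_9_general β k f
end

section
/- Let J be a subset of {1,…,M} and i ∈ {1,…,M}. (i) If i ∉ J, then the commutator [D_i, z_J] = D_i z_J − z_J D_i equals −β z_i Σ_{j∈J} z_{J∖{j}} K_{ij}. (ii) If i ∈ J, then [D_i, z_J] = z_J ( 1 + β Σ_{j ∈ {1,…,M}∖J} K_{ij} ). -/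
open MvPolynomial Finset

section Aux

set_option linter.unusedSectionVars false

variable {F : Type*} [Field F] [CharZero F] {M : ℕ}

lemma dX_ne {i j : Fin M} (h : i ≠ j) : (X i - X j : MvPolynomial (Fin M) F) ≠ 0 := by
  intro hh
  exact h (X_injective (by linear_combination hh))

lemma divExact_eq {d g q : MvPolynomial (Fin M) F} (hd : d ≠ 0) (h : g = d * q) :
    divExact d g = q := by
  unfold divExact
  rw [dif_pos ⟨q, h⟩]
  exact (mul_left_cancel₀ hd (h.symm.trans (⟨q, h⟩ : ∃ c, g = d * c).choose_spec)).symm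

lemma swap_dvd (i j : Fin M) (f : MvPolynomial (Fin M) F) :
    (X i - X j : MvPolynomial (Fin M) F) ∣ (f - rename (Equiv.swap i j) f) := by
  induction f using MvPolynomial.induction_on with
  | C a => simp
  | add p q hp hq =>
    rw [map_add, show p + q - (rename (Equiv.swap i j) p + rename (Equiv.swap i j) q)
      = (p - rename (Equiv.swap i j) p) + (q - rename (Equiv.swap i j) q) by ring]
    exact dvd_add hp hq
  | mul_X p k hp =>
    rw [map_mul, rename_X, show p * X k - rename (Equiv.swap i j) p * X (Equiv.swap i j k)
      = (p - rename (Equiv.swap i j) p) * X k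
        + rename (Equiv.swap i j) p * (X k - X (Equiv.swap i j k)) by ring]
    refine dvd_add (hp.mul_right _) (Dvd.dvd.mul_left ?_ _)
    rcases eq_or_ne k i with hki | hki
    · rw [hki, Equiv.swap_apply_left]
    rcases eq_or_ne k j with hkj | hkj
    · rw [hkj, Equiv.swap_apply_right,
        show (X j - X i : MvPolynomial (Fin M) F) = -(X i - X j) by ring]
      exact dvd_neg.mpr dvd_rfl
    · rw [Equiv.swap_apply_of_ne_of_ne hki hkj, sub_self]
      exact dvd_zero _

lemma pderiv_prod_X {i : Fin M} {S : Finset (Fin M)} (h : i ∉ S) :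
    pderiv i (∏ k ∈ S, X k : MvPolynomial (Fin M) F) = 0 := by
  induction S using Finset.induction_on with
  | empty => simp
  | @insert a s ha ih =>
    rw [Finset.prod_insert ha, pderiv_mul, ih (fun hh => h (Finset.mem_insert_of_mem hh)),
      mul_zero, pderiv_X]
    have hai : i ≠ a := by rintro rfl; exact h (Finset.mem_insert_self i s)
    simp [Pi.single_eq_of_ne, hai, hai.symm]

lemma pderiv_zJ {i : Fin M} {S : Finset (Fin M)} (h : i ∉ S) :
    pderiv i (zJ S : MvPolynomial (Fin M) F) = 0 := by
  simpa [zJ] using pderiv_prod_X (F := F) h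

lemma rename_zJ (σ : Fin M ≃ Fin M) (J : Finset (Fin M)) :
    rename σ (zJ J : MvPolynomial (Fin M) F) = ∏ k ∈ J, X (σ k) := by
  rw [zJ, map_prod]
  simp [rename_X]

lemma zJ_swap_nn {i j : Fin M} {J : Finset (Fin M)} (hi : i ∉ J) (hj : j ∉ J) :
    rename (Equiv.swap i j) (zJ J : MvPolynomial (Fin M) F) = zJ J := by
  rw [rename_zJ, zJ]
  exact Finset.prod_congr rfl fun k hk => by
    rw [Equiv.swap_apply_of_ne_of_ne (ne_of_mem_of_not_mem hk hi) (ne_of_mem_of_not_mem hk hj)]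

lemma zJ_swap_right {i j : Fin M} {J : Finset (Fin M)} (hi : i ∉ J) (hj : j ∈ J) :
    rename (Equiv.swap i j) (zJ J : MvPolynomial (Fin M) F) = X i * zJ (J.erase j) := by
  rw [rename_zJ, ← Finset.mul_prod_erase J _ hj, Equiv.swap_apply_right, zJ]
  congr 1
  exact Finset.prod_congr rfl fun k hk => by
    obtain ⟨hkj, hkJ⟩ := Finset.mem_erase.mp hk
    rw [Equiv.swap_apply_of_ne_of_ne (ne_of_mem_of_not_mem hkJ hi) hkj]

lemma zJ_swap_left {i j : Fin M} {J : Finset (Fin M)} (hi : i ∈ J) (hj : j ∉ J) :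
    rename (Equiv.swap i j) (zJ J : MvPolynomial (Fin M) F) = X j * zJ (J.erase i) := by
  rw [rename_zJ, ← Finset.mul_prod_erase J _ hi, Equiv.swap_apply_left, zJ]
  congr 1
  exact Finset.prod_congr rfl fun k hk => by
    obtain ⟨hki, hkJ⟩ := Finset.mem_erase.mp hk
    rw [Equiv.swap_apply_of_ne_of_ne hki (ne_of_mem_of_not_mem hkJ hj)]

lemma zJ_swap_bb {i j : Fin M} {J : Finset (Fin M)} (hi : i ∈ J) (hj : j ∈ J) (hij : i ≠ j) :
    rename (Equiv.swap i j) (zJ J : MvPolynomial (Fin M) F) = zJ J := by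
  have hji : j ∈ J.erase i := Finset.mem_erase.mpr ⟨fun h => hij h.symm, hj⟩
  rw [rename_zJ, ← Finset.mul_prod_erase J _ hi, ← Finset.mul_prod_erase (J.erase i) _ hji,
    Equiv.swap_apply_left, Equiv.swap_apply_right]
  conv_rhs => rw [zJ, ← Finset.mul_prod_erase J _ hi, ← Finset.mul_prod_erase (J.erase i) _ hji]
  rw [mul_left_comm]
  congr 1
  congr 1
  exact Finset.prod_congr rfl fun k hk => by
    obtain ⟨hkj, hk2⟩ := Finset.mem_erase.mp hk
    obtain ⟨hki, _⟩ := Finset.mem_erase.mp hk2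
    rw [Equiv.swap_apply_of_ne_of_ne hki hkj]

end Aux

/-- (i) if `i ∉ J` then `[D_i, z_J] = -β z_i ∑_{j∈J} z_{J∖{j}} K_{ij}`;
(ii) if `i ∈ J` then `[D_i, z_J] = z_J (1 + β ∑_{j ∉ J} K_{ij})`. -/
theorem statement_10 {F : Type*} [Field F] [CharZero F] {M : ℕ} (β : F) (i : Fin M)
    (J : Finset (Fin M)) (f : MvPolynomial (Fin M) F) :
    (i ∉ J →
      Dop β i (zJ J * f) - zJ J * Dop β i f
        = -(β • (X i * ∑ j ∈ J, zJ (J.erase j) * rename (Equiv.swap i j) f))) ∧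
    (i ∈ J →
      Dop β i (zJ J * f) - zJ J * Dop β i f
        = zJ J * (f + β • ∑ j ∈ Finset.univ \ J, rename (Equiv.swap i j) f)) := by
  classical
  have hdE : ∀ j : Fin M, j ≠ i → f - rename (Equiv.swap i j) f
      = (X i - X j) * divExact (X i - X j) (f - rename (Equiv.swap i j) f) := by
    intro j hj
    obtain ⟨c, hc⟩ := swap_dvd i j f
    rw [divExact_eq (dX_ne (Ne.symm hj)) hc]; exact hc
  constructor
  · intro hiJ
    have hJsub : J ⊆ Finset.univ.erase i := fun k hk =>
      Finset.mem_erase.mpr ⟨ne_of_mem_of_not_mem hk hiJ, Finset.mem_univ k⟩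
    have hinter : (Finset.univ.erase i) ∩ J = J := Finset.inter_eq_right.mpr hJsub
    have hsum : ∑ j ∈ Finset.univ.erase i,
        divExact (X i - X j) (zJ J * f - rename (Equiv.swap i j) (zJ J * f))
        = ∑ j ∈ Finset.univ.erase i,
          (zJ J * divExact (X i - X j) (f - rename (Equiv.swap i j) f)
            - if j ∈ J then zJ (J.erase j) * rename (Equiv.swap i j) f else 0) := by
      refine Finset.sum_congr rfl fun j hj => ?_
      have hji : j ≠ i := (Finset.mem_erase.mp hj).1
      have e1 := hdE j hji
      rw [map_mul]
      by_cases hjJ : j ∈ J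
      · rw [if_pos hjJ, zJ_swap_right hiJ hjJ]
        refine divExact_eq (dX_ne (Ne.symm hji)) ?_
        have hzj : (zJ J : MvPolynomial (Fin M) F) = X j * zJ (J.erase j) := by
          rw [zJ, zJ, ← Finset.mul_prod_erase J _ hjJ]
        linear_combination (f - (X i - X j)
            * divExact (X i - X j) (f - rename (Equiv.swap i j) f)) * hzj
          + (X j * zJ (J.erase j)) * e1
      · rw [if_neg hjJ, zJ_swap_nn hiJ hjJ]
        exact divExact_eq (dX_ne (Ne.symm hji)) (by linear_combination (zJ J : MvPolynomial (Fin M) F) * e1)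
    simp only [Dop, nabla, Kswap]
    rw [hsum, Finset.sum_sub_distrib, Finset.sum_ite_mem, hinter, ← Finset.mul_sum,
      pderiv_mul, pderiv_zJ hiJ, zero_mul, zero_add]
    simp only [smul_eq_C_mul]
    ring
  · intro hiJ
    have hzE : (zJ J : MvPolynomial (Fin M) F) = X i * zJ (J.erase i) := by
      rw [zJ, zJ, ← Finset.mul_prod_erase J _ hiJ]
    have hsub : Finset.univ \ J ⊆ Finset.univ.erase i := fun k hk =>
      Finset.mem_erase.mpr ⟨(ne_of_mem_of_not_mem hiJ (Finset.mem_sdiff.mp hk).2).symm, Finset.mem_univ k⟩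
    have hinter : (Finset.univ.erase i) ∩ (Finset.univ \ J) = Finset.univ \ J :=
      Finset.inter_eq_right.mpr hsub
    have hsum : ∑ j ∈ Finset.univ.erase i,
        divExact (X i - X j) (zJ J * f - rename (Equiv.swap i j) (zJ J * f))
        = ∑ j ∈ Finset.univ.erase i,
          (zJ J * divExact (X i - X j) (f - rename (Equiv.swap i j) f)
            + if j ∈ Finset.univ \ J then zJ (J.erase i) * rename (Equiv.swap i j) f else 0) := by
      refine Finset.sum_congr rfl fun j hj => ?_
      have hji : j ≠ i := (Finset.mem_erase.mp hj).1
      have e1 := hdE j hji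
      rw [map_mul]
      by_cases hjJ : j ∈ J
      · rw [if_neg (fun hh => (Finset.mem_sdiff.mp hh).2 hjJ), add_zero,
          zJ_swap_bb hiJ hjJ (Ne.symm hji)]
        exact divExact_eq (dX_ne (Ne.symm hji)) (by linear_combination (zJ J : MvPolynomial (Fin M) F) * e1)
      · rw [if_pos (Finset.mem_sdiff.mpr ⟨Finset.mem_univ j, hjJ⟩), zJ_swap_left hiJ hjJ]
        refine divExact_eq (dX_ne (Ne.symm hji)) ?_
        linear_combination (f - (X i - X j)
            * divExact (X i - X j) (f - rename (Equiv.swap i j) f)) * hzE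
          + (X i * zJ (J.erase i)) * e1
    simp only [Dop, nabla, Kswap]
    rw [hsum, Finset.sum_add_distrib, Finset.sum_ite_mem, hinter, ← Finset.mul_sum,
      ← Finset.mul_sum, hzE, mul_assoc, pderiv_mul, pderiv_X_self, one_mul, pderiv_mul,
      pderiv_zJ (Finset.notMem_erase i J), zero_mul, zero_add]
    simp only [smul_eq_C_mul]
    ring
end

section
/- Let 1 ≤ k+1 < ℓ ≤ M with ℓ ∉ {1,…,k+1}. Then for every polynomial f ∈ F[z_1,…,z_M] that is symmetric in the variables z_1,…,z_{k+1}: [Ñ_{k+1}, z_ℓ] f = −β ( z_1 K_{12}K_{23}⋯K_{k,k+1}K_{k+1,ℓ} + z_2 K_{23}⋯K_{k,k+1}K_{k+1,ℓ} + ⋯ + z_k K_{k,k+1}K_{k+1,ℓ} + z_{k+1} K_{k+1,ℓ} ) Ñ_k f. -/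
/-!
Induction on `k`. Put `g = (D_{k+2} + (k+1)β) f`. Since `Ñ_{k+2} = Ñ_{k+1} (D_{k+2} + (k+1)β)` and
`D_{k+2} z_ℓ = z_ℓ D_{k+2} - β z_{k+2} K_{k+2,ℓ}`, the commutator `[Ñ_{k+2}, z_ℓ] f` equals
`[Ñ_{k+1}, z_ℓ] g - β [Ñ_{k+1}, z_{k+2}] K_{k+2,ℓ} f` minus `β z_{k+2} Ñ_{k+1} K_{k+2,ℓ} f`.
Both `g` and `K_{k+2,ℓ} f` are symmetric in `z_1, …, z_{k+1}`, so the induction hypothesis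
evaluates the two commutators. The resulting chains of exchange operators are matched with the
target ones through `K_{k+1,k+2} K_{k+2,ℓ} = K_{k+1,ℓ} K_{k+1,k+2}` and
`K_{k+1,k+2} Ñ_{k+1} f = Ñ_k (g - β f)`, the latter because `f` is symmetric in `z_{k+1}, z_{k+2}`.
-/

open MvPolynomial Finset

/-- The string of exchange operators `z_m K_{m,m+1} K_{m+1,m+2} ⋯ K_{k-1,k} K_{k,l}`
(0-indexed) without the leading variable: `chainOp k kF l m g
  = K_{m,m+1} ⋯ K_{k-1,k} K_{k,l} g`, where `kF` is the index `k` as an element of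
`Fin M`. -/
noncomputable def chainOp {F : Type*} [Field F] {M : ℕ} [NeZero M] (k : ℕ) (kF l : Fin M)
    (m : ℕ) (g : MvPolynomial (Fin M) F) : MvPolynomial (Fin M) F :=
  ((List.finRange M).filter (fun (j : Fin M) => m ≤ (j : ℕ) ∧ (j : ℕ) + 1 ≤ k)).foldr
    (fun j acc => rename (Equiv.swap j (j + 1)) acc)
    (rename (Equiv.swap kF l) g)


section DunklOperator

variable {F : Type*} [Field F] {M : ℕ}

lemma X_sub_X_dvd_sub_rename_swap {R σ : Type*} [CommRing R] [DecidableEq σ] (i j : σ)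
    (f : MvPolynomial σ R) : (X i - X j : MvPolynomial σ R) ∣ f - rename (Equiv.swap i j) f := by
  induction f using MvPolynomial.induction_on with
  | C a => simp
  | add p q hp hq => simpa only [map_add, add_sub_add_comm] using dvd_add hp hq
  | mul_X p t hp =>
    have hX : (X i - X j : MvPolynomial σ R) ∣ X t - X (Equiv.swap i j t) := by
      rcases eq_or_ne t i with rfl | hti
      · simp
      rcases eq_or_ne t j with rfl | htj
      · rw [Equiv.swap_apply_right]
        exact ⟨-1, by ring⟩
      · simp [Equiv.swap_apply_of_ne_of_ne hti htj]
    have h : p * X t - rename (Equiv.swap i j) (p * X t)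
        = (p - rename (Equiv.swap i j) p) * X t
          + rename (Equiv.swap i j) p * (X t - X (Equiv.swap i j t)) := by
      rw [map_mul, rename_X]; ring
    rw [h]
    exact dvd_add (dvd_mul_of_dvd_left hp _) (dvd_mul_of_dvd_right hX _)

lemma mul_divExact_cancel {σ : Type*} {d f : MvPolynomial σ F} (h : d ∣ f) :
    d * divExact d f = f := by
  have h' : ∃ c, f = d * c := h
  rw [divExact, dif_pos h']
  exact h'.choose_spec.symm

lemma rename_Kswap (σ : Equiv.Perm (Fin M)) (i j : Fin M) (f : MvPolynomial (Fin M) F) :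
    rename σ (Kswap i j f) = Kswap (σ i) (σ j) (rename σ f) := by
  simp only [Kswap, rename_rename, ← Equiv.Perm.coe_mul, Equiv.swap_apply_apply,
    inv_mul_cancel_right]

/-- The divided difference `(z_i - z_j)⁻¹ (1 - K_{ij})` occurring in `∇_i`. -/
noncomputable def divDiff (i j : Fin M) (f : MvPolynomial (Fin M) F) : MvPolynomial (Fin M) F :=
  divExact (X i - X j) (f - Kswap i j f)

lemma X_sub_X_mul_divDiff (i j : Fin M) (f : MvPolynomial (Fin M) F) :
    (X i - X j) * divDiff i j f = f - Kswap i j f :=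
  mul_divExact_cancel (X_sub_X_dvd_sub_rename_swap i j f)

lemma divDiff_eq_of_mul_eq {i j : Fin M} (hij : i ≠ j) {f c : MvPolynomial (Fin M) F}
    (h : (X i - X j) * c = f - Kswap i j f) : divDiff i j f = c := by
  refine mul_left_cancel₀ ?_ ((X_sub_X_mul_divDiff i j f).trans h.symm)
  exact sub_ne_zero.mpr fun h' => hij (X_injective h')

lemma divDiff_sub {i j : Fin M} (hij : i ≠ j) (f g : MvPolynomial (Fin M) F) :
    divDiff i j (f - g) = divDiff i j f - divDiff i j g := by
  apply divDiff_eq_of_mul_eq hij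
  rw [mul_sub, X_sub_X_mul_divDiff, X_sub_X_mul_divDiff, Kswap, Kswap, Kswap, map_sub]
  ring

lemma divDiff_smul {i j : Fin M} (hij : i ≠ j) (c : F) (f : MvPolynomial (Fin M) F) :
    divDiff i j (c • f) = c • divDiff i j f := by
  apply divDiff_eq_of_mul_eq hij
  rw [mul_smul_comm, X_sub_X_mul_divDiff, Kswap, Kswap, map_smul, smul_sub]

lemma divDiff_X_mul_of_ne {i j l : Fin M} (hij : i ≠ j) (hli : l ≠ i) (hlj : l ≠ j)
    (f : MvPolynomial (Fin M) F) : divDiff i j (X l * f) = X l * divDiff i j f := by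
  apply divDiff_eq_of_mul_eq hij
  rw [mul_left_comm, X_sub_X_mul_divDiff, Kswap, Kswap, map_mul, rename_X,
    Equiv.swap_apply_of_ne_of_ne hli hlj, mul_sub]

lemma divDiff_X_mul_right {i l : Fin M} (hil : i ≠ l) (f : MvPolynomial (Fin M) F) :
    divDiff i l (X l * f) = X l * divDiff i l f - Kswap i l f := by
  apply divDiff_eq_of_mul_eq hil
  have h := X_sub_X_mul_divDiff i l f
  have hK : Kswap i l (X l * f) = X i * Kswap i l f := by
    rw [Kswap, Kswap, map_mul, rename_X, Equiv.swap_apply_right]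
  rw [hK]
  linear_combination (X l : MvPolynomial (Fin M) F) * h

lemma divDiff_rename {i j : Fin M} (hij : i ≠ j) (σ : Equiv.Perm (Fin M))
    (f : MvPolynomial (Fin M) F) :
    divDiff (σ i) (σ j) (rename σ f) = rename σ (divDiff i j f) := by
  apply divDiff_eq_of_mul_eq (σ.injective.ne hij)
  rw [← rename_X σ i, ← rename_X σ j, ← map_sub, ← map_mul, X_sub_X_mul_divDiff, map_sub,
    rename_Kswap]

lemma nabla_eq (β : F) (i : Fin M) (f : MvPolynomial (Fin M) F) :
    nabla β i f = pderiv i f + β • ∑ j ∈ univ.erase i, divDiff i j f := rfl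

lemma nabla_sub (β : F) (i : Fin M) (f g : MvPolynomial (Fin M) F) :
    nabla β i (f - g) = nabla β i f - nabla β i g := by
  have h : ∑ j ∈ univ.erase i, divDiff i j (f - g)
      = ∑ j ∈ univ.erase i, divDiff i j f - ∑ j ∈ univ.erase i, divDiff i j g := by
    rw [← sum_sub_distrib]
    exact sum_congr rfl fun j hj => divDiff_sub (ne_of_mem_erase hj).symm f g
  rw [nabla_eq, nabla_eq, nabla_eq, map_sub, h, smul_sub]
  abel

lemma nabla_smul (β : F) (i : Fin M) (c : F) (f : MvPolynomial (Fin M) F) :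
    nabla β i (c • f) = c • nabla β i f := by
  have h : ∑ j ∈ univ.erase i, divDiff i j (c • f) = c • ∑ j ∈ univ.erase i, divDiff i j f := by
    rw [smul_sum]
    exact sum_congr rfl fun j hj => divDiff_smul (ne_of_mem_erase hj).symm c f
  rw [nabla_eq, nabla_eq, Derivation.map_smul, h, smul_add, smul_comm β c]

/-- The only term of `∇_i` that does not commute with `z_l` is the divided difference `j = l`. -/
lemma nabla_X_mul (β : F) {i l : Fin M} (hil : i ≠ l) (f : MvPolynomial (Fin M) F) :
    nabla β i (X l * f) = X l * nabla β i f - β • Kswap i l f := by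
  have hl : l ∈ univ.erase i := mem_erase.mpr ⟨hil.symm, mem_univ l⟩
  have hsum : ∑ j ∈ univ.erase i, divDiff i j (X l * f)
      = X l * ∑ j ∈ univ.erase i, divDiff i j f - Kswap i l f := by
    rw [← add_sum_erase _ _ hl, ← add_sum_erase _ (fun j => divDiff i j f) hl, mul_add,
      mul_sum, divDiff_X_mul_right hil,
      sum_congr rfl fun j hj => divDiff_X_mul_of_ne (ne_of_mem_erase (mem_of_mem_erase hj)).symm
        hil.symm (ne_of_mem_erase hj).symm f]
    ring
  rw [nabla_eq, nabla_eq, pderiv_mul, pderiv_X_of_ne hil.symm, zero_mul, zero_add, hsum,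
    smul_sub, mul_add, mul_smul_comm]
  abel

lemma nabla_rename (β : F) (σ : Equiv.Perm (Fin M)) (i : Fin M) (f : MvPolynomial (Fin M) F) :
    nabla β (σ i) (rename σ f) = rename σ (nabla β i f) := by
  rw [nabla_eq, nabla_eq, map_add, map_smul, map_sum, pderiv_rename σ.injective]
  congr 2
  refine (sum_equiv σ (fun j => ?_) fun j hj => ?_).symm
  · simp
  · exact (divDiff_rename (ne_of_mem_erase hj).symm σ f).symm

lemma Dop_sub (β : F) (i : Fin M) (f g : MvPolynomial (Fin M) F) :
    Dop β i (f - g) = Dop β i f - Dop β i g := by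
  rw [Dop, Dop, Dop, nabla_sub, mul_sub]

lemma Dop_smul (β : F) (i : Fin M) (c : F) (f : MvPolynomial (Fin M) F) :
    Dop β i (c • f) = c • Dop β i f := by
  rw [Dop, Dop, nabla_smul, mul_smul_comm]

lemma Dop_X_mul (β : F) {i l : Fin M} (hil : i ≠ l) (f : MvPolynomial (Fin M) F) :
    Dop β i (X l * f) = X l * Dop β i f - β • (X i * Kswap i l f) := by
  rw [Dop, Dop, nabla_X_mul β hil, mul_sub, mul_smul_comm, mul_left_comm]

lemma rename_Dop (β : F) (σ : Equiv.Perm (Fin M)) (i : Fin M) (f : MvPolynomial (Fin M) F) :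
    rename σ (Dop β i f) = Dop β (σ i) (rename σ f) := by
  rw [Dop, Dop, map_mul, rename_X, nabla_rename]

end DunklOperator

section DJ

variable {F : Type*} [Field F] {M : ℕ}

lemma Dlist_sub (β : F) (c : ℕ) (L : List (Fin M)) (f g : MvPolynomial (Fin M) F) :
    Dlist β c L (f - g) = Dlist β c L f - Dlist β c L g := by
  induction L generalizing c with
  | nil => rfl
  | cons j L ih =>
    rw [Dlist, Dlist, Dlist, ih, Dop_sub, smul_sub]
    abel

lemma Dlist_smul (β : F) (c : ℕ) (L : List (Fin M)) (a : F) (f : MvPolynomial (Fin M) F) :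
    Dlist β c L (a • f) = a • Dlist β c L f := by
  induction L generalizing c with
  | nil => rfl
  | cons j L ih => rw [Dlist, Dlist, ih, Dop_smul, smul_comm _ a, smul_add]

lemma Dlist_concat (β : F) (c : ℕ) (L : List (Fin M)) (j : Fin M) (f : MvPolynomial (Fin M) F) :
    Dlist β c (L ++ [j]) f = Dlist β c L (Dop β j f + ((c + L.length : ℕ) * β : F) • f) := by
  induction L generalizing c with
  | nil => rfl
  | cons a L ih =>
    rw [List.cons_append, Dlist, Dlist, ih, List.length_cons, Nat.add_right_comm c 1, add_assoc]

lemma DJ_sub (β : F) (c : ℕ) (J : Finset (Fin M)) (f g : MvPolynomial (Fin M) F) :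
    DJ β c J (f - g) = DJ β c J f - DJ β c J g :=
  Dlist_sub β c _ f g

lemma DJ_smul (β : F) (c : ℕ) (J : Finset (Fin M)) (a : F) (f : MvPolynomial (Fin M) F) :
    DJ β c J (a • f) = a • DJ β c J f :=
  Dlist_smul β c _ a f

lemma DJ_empty (β : F) (c : ℕ) (f : MvPolynomial (Fin M) F) : DJ β c ∅ f = f := by
  rw [DJ, sort_empty]
  rfl

lemma rename_Dlist (β : F) (σ : Equiv.Perm (Fin M)) (c : ℕ) (L : List (Fin M))
    (hσ : ∀ j ∈ L, σ j = j) (f : MvPolynomial (Fin M) F) :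
    rename σ (Dlist β c L f) = Dlist β c L (rename σ f) := by
  induction L generalizing c with
  | nil => rfl
  | cons j L ih =>
    rw [Dlist, Dlist, map_add, map_smul, rename_Dop, hσ j List.mem_cons_self,
      ih (c + 1) fun i hi => hσ i (List.mem_cons_of_mem j hi)]

lemma rename_DJ (β : F) (σ : Equiv.Perm (Fin M)) (c : ℕ) (J : Finset (Fin M))
    (hσ : ∀ j ∈ J, σ j = j) (f : MvPolynomial (Fin M) F) :
    rename σ (DJ β c J f) = DJ β c J (rename σ f) :=
  rename_Dlist β σ c _ (fun j hj => hσ j ((mem_sort _).mp hj)) f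

lemma DJ_Kswap_of_notMem (β : F) (c : ℕ) {J : Finset (Fin M)} {i j : Fin M} (hi : i ∉ J)
    (hj : j ∉ J) (f : MvPolynomial (Fin M) F) :
    DJ β c J (Kswap i j f) = Kswap i j (DJ β c J f) :=
  (rename_DJ β _ c J (fun _ hp => Equiv.swap_apply_of_ne_of_ne (ne_of_mem_of_not_mem hp hi)
    (ne_of_mem_of_not_mem hp hj)) f).symm

lemma DJ_insert_of_forall_lt (β : F) (c : ℕ) {J : Finset (Fin M)} {j : Fin M}
    (hj : ∀ i ∈ J, i < j) (f : MvPolynomial (Fin M) F) :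
    DJ β c (insert j J) f = DJ β c J (Dop β j f + ((c + #J : ℕ) * β : F) • f) := by
  have hsort : (insert j J).sort (· ≤ ·) = J.sort (· ≤ ·) ++ [j] := by
    refine (sortedLT_sort _).pairwise.eq_of_mem_iff ?_ fun a => by simp [or_comm]
    exact List.pairwise_append.mpr ⟨(sortedLT_sort J).pairwise, List.pairwise_singleton _ _,
      fun a ha b hb => List.mem_singleton.mp hb ▸ hj a ((mem_sort _).mp ha)⟩
  rw [DJ, hsort, Dlist_concat, length_sort, DJ]

/-- The indices `0, …, k - 1`, i.e. the variables `z_1, …, z_k`. -/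
def initSeg (M k : ℕ) : Finset (Fin M) := univ.filter fun x => (x : ℕ) < k

lemma mem_initSeg {k : ℕ} {x : Fin M} : x ∈ initSeg M k ↔ (x : ℕ) < k := by
  simp [initSeg]

lemma initSeg_zero : initSeg M 0 = ∅ := by
  simp [initSeg]

lemma initSeg_mono {j k : ℕ} (h : j ≤ k) : initSeg M j ⊆ initSeg M k :=
  fun _ hx => mem_initSeg.mpr ((mem_initSeg.mp hx).trans_le h)

lemma card_initSeg {k : ℕ} (h : k ≤ M) : #(initSeg M k) = k :=
  Fin.card_filter_val_lt.trans (min_eq_right h)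

lemma initSeg_succ {k : ℕ} (h : k < M) : initSeg M (k + 1) = insert ⟨k, h⟩ (initSeg M k) := by
  ext x
  simp only [mem_initSeg, mem_insert, Fin.ext_iff]
  omega

lemma mk_notMem_initSeg {k : ℕ} (h : k < M) : (⟨k, h⟩ : Fin M) ∉ initSeg M k := by
  simp [mem_initSeg]

lemma DJ_initSeg_succ (β : F) (c : ℕ) {k : ℕ} (h : k < M) (f : MvPolynomial (Fin M) F) :
    DJ β c (initSeg M (k + 1)) f
      = DJ β c (initSeg M k) (Dop β ⟨k, h⟩ f + ((c + k : ℕ) * β : F) • f) := by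
  rw [initSeg_succ h, DJ_insert_of_forall_lt β c (fun i hi => mem_initSeg.mp hi) f,
    card_initSeg h.le]

/-- `K_{k,k+1}` commutes with `D_0, …, D_{k-1}` and conjugates `D_k` into `D_{k+1}`. -/
lemma Kswap_DJ_initSeg_succ (β : F) (c : ℕ) {k : ℕ} (hk : k + 1 < M) {f : MvPolynomial (Fin M) F}
    (hf : Kswap ⟨k, by omega⟩ ⟨k + 1, hk⟩ f = f) :
    Kswap ⟨k, by omega⟩ ⟨k + 1, hk⟩ (DJ β c (initSeg M (k + 1)) f)
      = DJ β c (initSeg M k) (Dop β ⟨k + 1, hk⟩ f + ((c + k : ℕ) * β : F) • f) := by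
  have hfix : ∀ j ∈ initSeg M k, Equiv.swap (⟨k, by omega⟩ : Fin M) ⟨k + 1, hk⟩ j = j :=
    fun j hj => Equiv.swap_apply_of_ne_of_ne (Fin.ne_of_val_ne (mem_initSeg.mp hj).ne)
      (Fin.ne_of_val_ne (by have := mem_initSeg.mp hj; simp; omega))
  rw [DJ_initSeg_succ β c (by omega), Kswap, rename_DJ β _ c _ hfix, map_add, map_smul,
    rename_Dop, Equiv.swap_apply_left, ← Kswap, hf]

end DJ

section SymmOn

variable {F : Type*} [Field F] {M : ℕ} {S T : Finset (Fin M)} {f g : MvPolynomial (Fin M) F}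

lemma SymmOn.mono (hf : SymmOn S f) (hTS : T ⊆ S) : SymmOn T f :=
  fun i hi j hj => hf i (hTS hi) j (hTS hj)

lemma SymmOn.add (hf : SymmOn S f) (hg : SymmOn S g) : SymmOn S (f + g) :=
  fun i hi j hj => by rw [map_add, hf i hi j hj, hg i hi j hj]

lemma SymmOn.smul (c : F) (hf : SymmOn S f) : SymmOn S (c • f) :=
  fun i hi j hj => by rw [map_smul, hf i hi j hj]

lemma SymmOn.Dop (β : F) {i : Fin M} (hf : SymmOn S f) (hi : i ∉ S) :
    SymmOn S (Dop β i f) := fun p hp q hq => by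
  rw [rename_Dop, Equiv.swap_apply_of_ne_of_ne (ne_of_mem_of_not_mem hp hi).symm
    (ne_of_mem_of_not_mem hq hi).symm, hf p hp q hq]

lemma SymmOn.Kswap {i j : Fin M} (hf : SymmOn S f) (hi : i ∉ S) (hj : j ∉ S) :
    SymmOn S (Kswap i j f) := fun p hp q hq => by
  rw [rename_Kswap, Equiv.swap_apply_of_ne_of_ne (ne_of_mem_of_not_mem hp hi).symm
    (ne_of_mem_of_not_mem hq hi).symm, Equiv.swap_apply_of_ne_of_ne
    (ne_of_mem_of_not_mem hp hj).symm (ne_of_mem_of_not_mem hq hj).symm, hf p hp q hq]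

end SymmOn

section ChainOp

variable {F : Type*} [Field F] {M : ℕ} [NeZero M]

lemma foldr_rename_eq_rename_prod {ι σ R : Type*} [CommSemiring R] (s : ι → Equiv.Perm σ)
    (L : List ι) (g : MvPolynomial σ R) :
    L.foldr (fun j acc => rename (s j) acc) g = rename ⇑(L.map s).prod g := by
  induction L with
  | nil => simp
  | cons j L ih => rw [List.foldr_cons, ih, List.map_cons, List.prod_cons, Equiv.Perm.coe_mul,
      ← rename_rename]

/-- The permutation `(m, m+1)(m+1, m+2) ⋯ (k-1, k)`, so that
`chainOp k kF l m = K_{m,m+1} ⋯ K_{k-1,k} K_{k,l}` is a single renaming. -/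
def adjSwapProd (m k : ℕ) : Equiv.Perm (Fin M) :=
  (((List.finRange M).filter fun j : Fin M => m ≤ (j : ℕ) ∧ (j : ℕ) + 1 ≤ k).map
    fun j => Equiv.swap j (j + 1)).prod

lemma chainOp_eq_rename (k : ℕ) (kF l : Fin M) (m : ℕ) (g : MvPolynomial (Fin M) F) :
    chainOp k kF l m g = rename ⇑(adjSwapProd m k * Equiv.swap kF l : Equiv.Perm (Fin M)) g := by
  rw [chainOp, foldr_rename_eq_rename_prod, Equiv.Perm.coe_mul, ← rename_rename]
  rfl

lemma adjSwapProd_of_le {m k : ℕ} (h : k ≤ m) : adjSwapProd (M := M) m k = 1 := by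
  rw [adjSwapProd, List.filter_eq_nil_iff.mpr fun j _ => by simp; omega, List.map_nil,
    List.prod_nil]

lemma adjSwapProd_succ {m k : ℕ} (hm : m ≤ k) (hk : k + 1 < M) :
    adjSwapProd m (k + 1) = adjSwapProd m k * Equiv.swap ⟨k, by omega⟩ ⟨k + 1, hk⟩ := by
  have hsorted := (List.sortedLT_finRange M).pairwise
  have hlist : (List.finRange M).filter (fun j : Fin M => m ≤ (j : ℕ) ∧ (j : ℕ) + 1 ≤ k + 1)
      = (List.finRange M).filter (fun j : Fin M => m ≤ (j : ℕ) ∧ (j : ℕ) + 1 ≤ k)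
        ++ [⟨k, by omega⟩] := by
    refine (hsorted.filter _).eq_of_mem_iff ?_ fun j => ?_
    · refine List.pairwise_append.mpr ⟨hsorted.filter _, List.pairwise_singleton _ _, ?_⟩
      intro a ha b hb
      rw [List.mem_singleton.mp hb, Fin.lt_def]
      simp only [List.mem_filter, decide_eq_true_eq] at ha
      exact Nat.lt_of_succ_le ha.2.2
    · simp only [List.mem_append, List.mem_filter, List.mem_finRange, true_and,
        decide_eq_true_eq, List.mem_singleton, Fin.ext_iff]
      omega
  have hsucc : (⟨k, by omega⟩ + 1 : Fin M) = ⟨k + 1, hk⟩ := by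
    ext
    simp [Fin.val_add, Nat.mod_eq_of_lt hk]
  rw [adjSwapProd, hlist, List.map_append, List.prod_append, List.map_singleton,
    List.prod_singleton, hsucc, adjSwapProd]

lemma chainOp_sub (k : ℕ) (kF l : Fin M) (m : ℕ) (g g' : MvPolynomial (Fin M) F) :
    chainOp k kF l m (g - g') = chainOp k kF l m g - chainOp k kF l m g' := by
  simp only [chainOp_eq_rename, map_sub]

lemma chainOp_smul (k : ℕ) (kF l : Fin M) (m : ℕ) (a : F) (g : MvPolynomial (Fin M) F) :
    chainOp k kF l m (a • g) = a • chainOp k kF l m g := by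
  simp only [chainOp_eq_rename, map_smul]

lemma chainOp_of_le {k m : ℕ} (h : k ≤ m) (kF l : Fin M) (g : MvPolynomial (Fin M) F) :
    chainOp k kF l m g = Kswap kF l g := by
  rw [chainOp_eq_rename, adjSwapProd_of_le h, one_mul, Kswap]

lemma chainOp_succ {m k : ℕ} (hm : m ≤ k) (hk : k + 1 < M) (l : Fin M)
    (g : MvPolynomial (Fin M) F) :
    chainOp (k + 1) ⟨k + 1, hk⟩ l m g
      = chainOp k ⟨k, by omega⟩ ⟨k + 1, hk⟩ m (Kswap ⟨k + 1, hk⟩ l g) := by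
  rw [chainOp_eq_rename, chainOp_eq_rename, Kswap, rename_rename, ← Equiv.Perm.coe_mul,
    adjSwapProd_succ hm hk, mul_assoc]

lemma chainOp_succ_eq_chainOp_Kswap {m k : ℕ} (hm : m ≤ k) (hk : k + 1 < M) {l : Fin M}
    (hl : k + 1 < (l : ℕ)) (g : MvPolynomial (Fin M) F) :
    chainOp (k + 1) ⟨k + 1, hk⟩ l m g
      = chainOp k ⟨k, by omega⟩ l m (Kswap ⟨k, by omega⟩ ⟨k + 1, hk⟩ g) := by
  have hswap : Equiv.swap (⟨k, by omega⟩ : Fin M) ⟨k + 1, hk⟩ * Equiv.swap ⟨k + 1, hk⟩ l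
      = Equiv.swap ⟨k, by omega⟩ l * Equiv.swap ⟨k, by omega⟩ ⟨k + 1, hk⟩ := by
    rw [Equiv.mul_swap_eq_swap_mul, Equiv.swap_apply_right,
      Equiv.swap_apply_of_ne_of_ne (Fin.ne_of_val_ne (by simp; omega))
        (Fin.ne_of_val_ne (by simp; omega))]
  rw [chainOp_eq_rename, chainOp_eq_rename, Kswap, rename_rename, ← Equiv.Perm.coe_mul,
    adjSwapProd_succ hm hk, mul_assoc, hswap, mul_assoc]

end ChainOp

section Commutator

variable {F : Type*} [Field F] {M : ℕ} [NeZero M]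

lemma chainOp_succ_DJ_initSeg_succ (β : F) (c : ℕ) {m k : ℕ} (hm : m ≤ k) (hk : k + 1 < M)
    {l : Fin M} (hl : k + 1 < (l : ℕ)) {f : MvPolynomial (Fin M) F}
    (hf : Kswap ⟨k, by omega⟩ ⟨k + 1, hk⟩ f = f) :
    chainOp (k + 1) ⟨k + 1, hk⟩ l m (DJ β c (initSeg M (k + 1)) f)
      = chainOp k ⟨k, by omega⟩ l m
          (DJ β c (initSeg M k) (Dop β ⟨k + 1, hk⟩ f + ((c + k : ℕ) * β : F) • f)) := by
  rw [chainOp_succ_eq_chainOp_Kswap hm hk hl, Kswap_DJ_initSeg_succ β c hk hf]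

lemma chainOp_DJ_initSeg_Kswap (β : F) (c : ℕ) {m k : ℕ} (hm : m ≤ k) (hk : k + 1 < M)
    {l : Fin M} (hl : k + 1 < (l : ℕ)) {f : MvPolynomial (Fin M) F}
    (hf : Kswap ⟨k, by omega⟩ ⟨k + 1, hk⟩ f = f) :
    chainOp k ⟨k, by omega⟩ ⟨k + 1, hk⟩ m (DJ β c (initSeg M k) (Kswap ⟨k + 1, hk⟩ l f))
      = chainOp k ⟨k, by omega⟩ l m (DJ β c (initSeg M k) f) := by
  have hnotMem : ∀ {i : Fin M}, k ≤ (i : ℕ) → i ∉ initSeg M k :=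
    fun hi h => (mem_initSeg.mp h).not_ge hi
  rw [DJ_Kswap_of_notMem β c (hnotMem (by simp)) (hnotMem (by omega)),
    ← chainOp_succ hm hk, chainOp_succ_eq_chainOp_Kswap hm hk hl,
    ← DJ_Kswap_of_notMem β c (hnotMem le_rfl) (hnotMem (by simp)), hf]

theorem DJ_initSeg_X_mul_sub (β : F) (k : ℕ) (l : Fin M) (hkl : k < (l : ℕ))
    (f : MvPolynomial (Fin M) F) (hf : SymmOn (initSeg M (k + 1)) f) :
    DJ β 0 (initSeg M (k + 1)) (X l * f) - X l * DJ β 0 (initSeg M (k + 1)) f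
      = -(β • ∑ m ∈ initSeg M (k + 1),
          X m * chainOp k ⟨k, lt_trans hkl l.isLt⟩ l m (DJ β 0 (initSeg M k) f)) := by
  induction k generalizing l f with
  | zero =>
    have h0 : 0 < M := hkl.trans l.isLt
    have hN : ∀ h, DJ β 0 (initSeg M (0 + 1)) h = Dop β ⟨0, h0⟩ h := fun h => by
      rw [DJ_initSeg_succ β 0 h0, initSeg_zero, DJ_empty, Nat.cast_zero, zero_mul, zero_smul,
        add_zero]
    rw [hN, hN, Dop_X_mul β (Fin.ne_of_val_ne hkl.ne), initSeg_succ h0, initSeg_zero,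
      insert_empty, sum_singleton, DJ_empty, chainOp_of_le (Nat.zero_le _), sub_sub_cancel_left]
  | succ k ih =>
    have hk : k + 1 < M := hkl.trans l.isLt
    set a : Fin M := ⟨k + 1, hk⟩
    set g := Dop β a f + ((0 + (k + 1) : ℕ) * β : F) • f with hg
    have ha : a ∉ initSeg M (k + 1) := mk_notMem_initSeg hk
    have hl : l ∉ initSeg M (k + 1) := fun h => (mem_initSeg.mp h).not_gt (by omega)
    have hf' : SymmOn (initSeg M (k + 1)) f := hf.mono (initSeg_mono (by omega))
    have hkaf : Kswap ⟨k, by omega⟩ a f = f :=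
      hf _ (mem_initSeg.mpr (by simp)) a (mem_initSeg.mpr (by simp [a]))
    have ih_l := ih l (by omega) g ((hf'.Dop β ha).add (hf'.smul _))
    have ih_a := ih a (by simp [a]) (Kswap a l f) (hf'.Kswap ha hl)
    have hPX : Dop β a (X l * f) + ((0 + (k + 1) : ℕ) * β : F) • (X l * f)
        = X l * g - β • (X a * Kswap a l f) := by
      rw [Dop_X_mul β (Fin.ne_of_val_ne hkl.ne), hg, mul_add, mul_smul_comm]
      abel
    have hPf : Dop β a f + ((0 + k : ℕ) * β : F) • f = g - β • f := by
      rw [hg]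
      module
    have hterm : ∀ m ∈ initSeg M (k + 1), X m * chainOp (k + 1) a l m (DJ β 0 (initSeg M (k + 1)) f)
        = X m * chainOp k ⟨k, by omega⟩ l m (DJ β 0 (initSeg M k) g)
          - β • (X m * chainOp k ⟨k, by omega⟩ l m (DJ β 0 (initSeg M k) f)) := fun m hm => by
      rw [chainOp_succ_DJ_initSeg_succ β 0 (Nat.le_of_lt_succ (mem_initSeg.mp hm)) hk hkl hkaf,
        hPf, DJ_sub, DJ_smul, chainOp_sub, chainOp_smul, mul_sub, mul_smul_comm]
    rw [sum_congr rfl fun m hm => by rw [chainOp_DJ_initSeg_Kswap β 0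
      (Nat.le_of_lt_succ (mem_initSeg.mp hm)) hk hkl hkaf]] at ih_a
    rw [DJ_initSeg_succ β 0 hk, DJ_initSeg_succ β 0 hk, hPX, DJ_sub, DJ_smul, initSeg_succ hk,
      sum_insert ha, chainOp_of_le le_rfl, ← DJ_Kswap_of_notMem β 0 ha hl, ← hg,
      sum_congr rfl hterm, sum_sub_distrib, ← smul_sum]
    linear_combination (norm := module) ih_l - β • ih_a

end Commutator

theorem statement_11_general {F : Type*} [Field F] {M : ℕ} (β : F) (k : ℕ)
    (l : Fin M) (hkl : k < (l : ℕ)) (f : MvPolynomial (Fin M) F)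
    (hf : SymmOn (Finset.univ.filter (fun x : Fin M => (x : ℕ) < k + 1)) f) :
    letI : NeZero M := ⟨(Fin.pos l).ne'⟩
    DJ β 0 (Finset.univ.filter (fun x : Fin M => (x : ℕ) < k + 1)) (X l * f)
      - X l * DJ β 0 (Finset.univ.filter (fun x : Fin M => (x : ℕ) < k + 1)) f
    = -(β • ∑ m ∈ Finset.univ.filter (fun x : Fin M => (x : ℕ) < k + 1),
        X m * chainOp k (⟨k, lt_trans hkl l.isLt⟩ : Fin M) l (m : ℕ)
          (DJ β 0 (Finset.univ.filter (fun x : Fin M => (x : ℕ) < k)) f)) :=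
  haveI : NeZero M := ⟨(Fin.pos l).ne'⟩
  DJ_initSeg_X_mul_sub β k l hkl f hf

/-- for `f` symmetric in `z_1,…,z_{k+1}` and `ℓ ∉ {1,…,k+1}` (0-indexed:
`l` with `k < l`):
`[Ñ_{k+1}, z_ℓ] f = -β (z_1 K_{12}⋯K_{k,k+1}K_{k+1,ℓ} + ⋯ + z_{k+1} K_{k+1,ℓ}) Ñ_k f`. -/
theorem statement_11 {F : Type*} [Field F] [CharZero F] {M : ℕ} (β : F) (k : ℕ)
    (l : Fin M) (hkl : k < (l : ℕ)) (f : MvPolynomial (Fin M) F)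
    (hf : SymmOn (Finset.univ.filter (fun x : Fin M => (x : ℕ) < k + 1)) f) :
    letI : NeZero M := ⟨(Fin.pos l).ne'⟩
    DJ β 0 (Finset.univ.filter (fun x : Fin M => (x : ℕ) < k + 1)) (X l * f)
      - X l * DJ β 0 (Finset.univ.filter (fun x : Fin M => (x : ℕ) < k + 1)) f
    = -(β • ∑ m ∈ Finset.univ.filter (fun x : Fin M => (x : ℕ) < k + 1),
        X m * chainOp k (⟨k, lt_trans hkl l.isLt⟩ : Fin M) l (m : ℕ)
          (DJ β 0 (Finset.univ.filter (fun x : Fin M => (x : ℕ) < k)) f)) :=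
  statement_11_general β k l hkl f hf
end
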